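/- arXiv:math/9907019 — 2 statements merged into one kernel-verified Lean document; each statement's English description precedes it below -/
import Mathlib

section
/- Let A = F_r[T] and define, for a monic polynomial n ∈ A of degree d, ⟨n⟩ := n/T^d ∈ F_r[[1/T]] (a 1-unit). For a nonnegative integer j divisible by r - 1, the set {⟨n⟩^j : n monic of degree d} (with multiplicity) equals the set {f(1/T)^j : f a polynomial in the variable u of degree < d with nonzero constant term, f monic in u}. Consequently, with ζ_A(x, -j) = Σ_{d≥0} x^{-d} Σ_{n monic, deg n = d} ⟨n⟩^j and ζ_{A,v}(x, -j) = Σ_{d≥0} x^{-d} Σ_{n monic, deg n = d, n(0)≠0} n(T)^j evaluated under the isomorphism T ↦ 1/T, one has (1 - x^{-1})^{-1} ζ_{A,v}(x, -j) = ζ_A(x, -j), where v = (T). -/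
/-!
For `s = 1/T` one has `⟨n⟩ = n(1/s) s^{deg n} = rev(n)(s)`, where `rev` reverses coefficients.
Writing a monic `n` of degree `d` as `T^k m` with `m(0) ≠ 0`, reversal forgets `T^k`, and
rescaling `rev(m)` by its leading coefficient `m(0)` gives a monic polynomial with nonzero
constant term of degree `≤ d`; `f ↦ T^{d - deg f} rev(f)/f(0)` inverts this. The scalar
disappears in the `j`-th power because `c^(r-1) = 1` on `F_r^×`. Sorting the `f` by degree,
`Σ_{deg n = d} ⟨n⟩^j` is the `d`-th partial sum of the coefficients of `ζ_{A,v}(x,-j)`,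
and taking partial sums is multiplication by `(1 - x⁻¹)⁻¹`.
-/

open Polynomial

namespace Polynomial

section Semiring

variable {R : Type*} [Semiring R]

theorem reverse_reverse_mul_X_pow (p : R[X]) :
    p.reverse.reverse * X ^ p.natTrailingDegree = p := by
  conv_rhs => rw [← mirror_mirror (p := p)]
  rw [mirror, mirror_natTrailingDegree, mirror, reverse_mul_X_pow]

theorem reverse_C_mul [NoZeroDivisors R] (a : R) (p : R[X]) :
    (C a * p).reverse = C a * p.reverse := by
  rw [reverse_mul_of_domain, reverse_C]

end Semiring

section Field

variable {K : Type*} [Field K]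

noncomputable def monicReverse (p : K[X]) : K[X] :=
  C p.trailingCoeff⁻¹ * p.reverse

theorem monic_monicReverse {p : K[X]} (hp : p ≠ 0) : p.monicReverse.Monic := by
  rw [Monic, monicReverse, leadingCoeff_mul, leadingCoeff_C, reverse_leadingCoeff,
    inv_mul_cancel₀ (trailingCoeff_nonzero_iff_nonzero.mpr hp)]

theorem coeff_zero_monicReverse_ne_zero {p : K[X]} (hp : p ≠ 0) :
    p.monicReverse.coeff 0 ≠ 0 := by
  rw [monicReverse, coeff_C_mul, coeff_zero_reverse]
  exact mul_ne_zero (inv_ne_zero (trailingCoeff_nonzero_iff_nonzero.mpr hp))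
    (leadingCoeff_ne_zero.mpr hp)

theorem natDegree_monicReverse {p : K[X]} (hp : p ≠ 0) :
    p.monicReverse.natDegree = p.natDegree - p.natTrailingDegree := by
  rw [monicReverse, natDegree_C_mul (inv_ne_zero (trailingCoeff_nonzero_iff_nonzero.mpr hp)),
    reverse_natDegree]

theorem monicReverse_X_pow_mul (p : K[X]) (k : ℕ) :
    (X ^ k * p).monicReverse = p.monicReverse := by
  rw [monicReverse, monicReverse, ← reverse_leadingCoeff, ← reverse_leadingCoeff,
    reverse_X_pow_mul]

theorem X_pow_mul_monicReverse_monicReverse {p : K[X]} (hp : p.Monic) :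
    X ^ p.natTrailingDegree * p.monicReverse.monicReverse = p := by
  have hc : p.trailingCoeff ≠ 0 := trailingCoeff_nonzero_iff_nonzero.mpr hp.ne_zero
  have htc : p.monicReverse.trailingCoeff = p.trailingCoeff⁻¹ := by
    rw [trailingCoeff_eq_coeff_zero (coeff_zero_monicReverse_ne_zero hp.ne_zero), monicReverse,
      coeff_C_mul, coeff_zero_reverse, hp.leadingCoeff, mul_one]
  rw [monicReverse, htc, inv_inv, monicReverse, reverse_C_mul, ← mul_assoc (C _), ← C_mul,
    mul_inv_cancel₀ hc, C_1, one_mul, mul_comm, reverse_reverse_mul_X_pow]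

theorem monicReverse_monicReverse {f : K[X]} (hf : f.Monic) (h0 : f.coeff 0 ≠ 0) :
    f.monicReverse.monicReverse = f := by
  simpa [natTrailingDegree_eq_zero.mpr (Or.inr h0)] using
    X_pow_mul_monicReverse_monicReverse hf

theorem bijOn_monicReverse (d : ℕ) :
    Set.BijOn monicReverse {n : K[X] | n.Monic ∧ n.natDegree = d}
      {f | f.Monic ∧ f.coeff 0 ≠ 0 ∧ f.natDegree ≤ d} := by
  refine Set.InvOn.bijOn (f' := fun f => X ^ (d - f.natDegree) * f.monicReverse) ⟨?_, ?_⟩ ?_ ?_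
  · rintro n ⟨hn, rfl⟩
    have hle := natTrailingDegree_le_natDegree (p := n)
    simp only [natDegree_monicReverse hn.ne_zero]
    rw [Nat.sub_sub_self hle, X_pow_mul_monicReverse_monicReverse hn]
  · rintro f ⟨hf, h0, -⟩
    simp only [monicReverse_X_pow_mul, monicReverse_monicReverse hf h0]
  · rintro n ⟨hn, rfl⟩
    exact ⟨monic_monicReverse hn.ne_zero, coeff_zero_monicReverse_ne_zero hn.ne_zero,
      (natDegree_monicReverse hn.ne_zero).trans_le (Nat.sub_le _ _)⟩
  · rintro f ⟨hf, h0, hd⟩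
    have hdeg : f.monicReverse.natDegree = f.natDegree := by
      rw [natDegree_monicReverse hf.ne_zero, natTrailingDegree_eq_zero.mpr (Or.inr h0),
        Nat.sub_zero]
    refine ⟨(monic_X_pow _).mul (monic_monicReverse hf.ne_zero), ?_⟩
    rw [(monic_X_pow _).natDegree_mul (monic_monicReverse hf.ne_zero), natDegree_X_pow, hdeg]
    omega

theorem aeval_monicReverse_pow {A : Type*} [CommSemiring A] [Algebra K A] [Fintype K]
    {j : ℕ} (hj : Fintype.card K - 1 ∣ j) {p : K[X]} (hp : p ≠ 0) (s : A) :
    aeval s p.monicReverse ^ j = aeval s p.reverse ^ j := by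
  obtain ⟨k, rfl⟩ := hj
  rw [monicReverse, map_mul, aeval_C, mul_pow, ← map_pow, pow_mul,
    FiniteField.pow_card_sub_one_eq_one _ (inv_ne_zero (trailingCoeff_nonzero_iff_nonzero.mpr hp)),
    one_pow, map_one, one_mul]

end Field

theorem aeval_inv_mul_pow_natDegree {R L : Type*} [CommSemiring R] [Field L] [Algebra R L]
    {s : L} (hs : s ≠ 0) (p : R[X]) :
    aeval s⁻¹ p * s ^ p.natDegree = aeval s p.reverse := by
  have : Invertible s⁻¹ := invertibleOfNonzero (inv_ne_zero hs)
  have h := eval₂_reverse_mul_pow (algebraMap R L) s⁻¹ p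
  rw [invOf_eq_inv, inv_inv, inv_pow] at h
  rw [aeval_def, aeval_def, ← h, inv_mul_cancel_right₀ (pow_ne_zero _ hs)]

end Polynomial

theorem PowerSeries.mk_eq_one_sub_X_mul_mk_sum_range {R : Type*} [CommRing R] (b : ℕ → R) :
    mk b = (1 - X) * mk fun d => ∑ k ∈ Finset.range (d + 1), b k := by
  ext (_ | n)
  · simp
  · simp [sub_mul, Finset.sum_range_succ _ (n + 1), coeff_succ_X_mul]

theorem Finset.map_val_comp_of_bijOn {α β γ : Type*} {S : Finset α} {T : Finset β} {φ : α → β}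
    (h : Set.BijOn φ S T) (g : β → γ) : S.val.map (g ∘ φ) = T.val.map g := by
  classical
  have : S.image φ = T := Finset.coe_injective (by rw [coe_image, h.image_eq])
  rw [← Multiset.map_map, ← Finset.image_val_of_injOn h.injOn, this]

open Finset

open Polynomial in
/-- Let `A = F_r[T]` and let `s = 1/T` be the uniformizer in
`K = F_r((1/T))`, so that `⟨n⟩ = n(1/s)·s^{deg n}` for monic `n`.  For `j` divisible by
`r - 1`, the multiset `{⟨n⟩^j : n monic of degree d}` equals the multiset
`{f(s)^j : f monic with nonzero constant term of degree ≤ d}`; consequently, with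
`ζ_A(x,-j) = Σ_d x^{-d} Σ_{n monic, deg n = d} ⟨n⟩^j` and the `v`-adic zeta
(`v = (T)`) transported by the isomorphism `T ↦ 1/T`,
`ζ_{A,v}(x,-j) = Σ_d x^{-d} Σ_{n monic, deg n = d, n(0) ≠ 0} n(s)^j`, one has
`ζ_{A,v}(x,-j) = (1 - x⁻¹)·ζ_A(x,-j)` as power series in `x⁻¹`. -/
theorem stmt6 (Fr : Type*) [Field Fr] [Fintype Fr]
    (E : ℕ → Finset (Polynomial Fr))
    (hE : ∀ d n, n ∈ E d ↔ n.Monic ∧ n.natDegree = d)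
    (F : ℕ → Finset (Polynomial Fr))
    (hF : ∀ d f, f ∈ F d ↔ f.Monic ∧ f.coeff 0 ≠ 0 ∧ f.natDegree ≤ d)
    (Ev : ℕ → Finset (Polynomial Fr))
    (hEv : ∀ d n, n ∈ Ev d ↔ n.Monic ∧ n.natDegree = d ∧ n.coeff 0 ≠ 0)
    (j : ℕ) (hj : (Fintype.card Fr - 1) ∣ j)
    (s : LaurentSeries Fr) (hs : s = HahnSeries.single (1 : ℤ) (1 : Fr))
    (bracket : Polynomial Fr → LaurentSeries Fr)
    (hbracket : ∀ n : Polynomial Fr, bracket n = aeval s⁻¹ n * s ^ n.natDegree) :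
    (∀ d : ℕ, ((E d).val.map fun n => bracket n ^ j) =
        ((F d).val.map fun f => (aeval s f) ^ j)) ∧
    (PowerSeries.mk fun d => ∑ n ∈ Ev d, (aeval s n) ^ j) =
      (1 - PowerSeries.X) * (PowerSeries.mk fun d => ∑ n ∈ E d, bracket n ^ j) := by
  classical
  have hs0 : s ≠ 0 := hs ▸ HahnSeries.single_ne_zero one_ne_zero
  have hmultiset (d : ℕ) :
      ((E d).val.map fun n => bracket n ^ j) = (F d).val.map fun f => aeval s f ^ j := by
    have hbij : Set.BijOn monicReverse (E d : Set Fr[X]) (F d) := by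
      convert bijOn_monicReverse (K := Fr) d using 1 <;> ext <;> simp [hE, hF]
    rw [← Finset.map_val_comp_of_bijOn hbij]
    refine Multiset.map_congr rfl fun n hn => ?_
    rw [Function.comp_apply, hbracket, aeval_inv_mul_pow_natDegree hs0,
      aeval_monicReverse_pow hj ((hE d n).mp hn).1.ne_zero]
  have hsum_by_degree (d : ℕ) :
      ∑ f ∈ F d, aeval s f ^ j = ∑ k ∈ range (d + 1), ∑ n ∈ Ev k, aeval s n ^ j := by
    rw [← sum_fiberwise_of_maps_to (g := natDegree) (t := range (d + 1))
      fun f hf => mem_range_succ_iff.mpr ((hF d f).mp hf).2.2]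
    refine sum_congr rfl fun k hk => sum_congr (ext fun f => ?_) fun _ _ => rfl
    have hkd := mem_range_succ_iff.mp hk
    simp only [mem_filter, hF, hEv]
    grind
  refine ⟨hmultiset, ?_⟩
  rw [PowerSeries.mk_eq_one_sub_X_mul_mk_sum_range]
  congr 2
  funext d
  rw [sum_eq_multiset_sum (s := E d), hmultiset, ← sum_eq_multiset_sum, hsum_by_degree]
end

section
/- With notation as above (r = 2, A = F_2[T], A' = F_2[√T], n ↦ n' the square-root bijection on monics), define the Dirichlet series L(x,y) = Σ_{n monic in A} x^{-deg_T n} · n'(√θ) · ⟨n⟩^{-y} and ζ_{A'}(x', y') = Σ_{m monic in A'} (x')^{-deg_{√T} m} ⟨m⟩'^{-y'}, where ⟨n⟩ is the 1-unit part with respect to π = 1/T and ⟨m⟩' the 1-unit part with respect to π' = 1/√T. Then for all y ∈ ℤ_p, L(x, y) = ζ_{A'}(x·π', 2y - 1), where the identity is one of formal series in x^{-1} with coefficients in F_2((1/√T)). -/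
/-!
Over `𝔽₂` the square-root bijection is the identity, because `n(T²) = n(T)²`; for the same
reason `⟨n⟩ = ⟨n⟩'²`. For monic `n` of degree `d`, `⟨n⟩' = n(√θ)·√θ^{-d}` is the reversed polynomial
of `n` evaluated at `s = 1/√θ`, which has constant term `1`, so `⟨n⟩'` is a `1`-unit and
`n(√θ)·⟨n⟩^{-y} = s^{-d}·⟨n⟩'·⟨n⟩'^{-2y} = s^{-d}·⟨n⟩'^{1-2y}` termwise.
-/

open HahnSeries Polynomial

namespace Polynomial

variable {R : Type*} [CommRing R]

theorem aeval_single_neg_one_monomial (n : ℕ) (a : R) :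
    aeval (single (-1) 1 : LaurentSeries R) (monomial n a) = single (-(n : ℤ)) a := by
  rw [aeval_monomial, single_pow, algebraMap_apply', PowerSeries.algebraMap_eq, ofPowerSeries_C,
    C_apply, single_mul_single]
  simp

theorem coeff_aeval_single_neg_one_natCast_neg (p : R[X]) (i : ℕ) :
    (aeval (single (-1) 1 : LaurentSeries R) p).coeff (-(i : ℤ)) = p.coeff i := by
  induction p using Polynomial.induction_on' with
  | add p q hp hq => simp [hp, hq]
  | monomial n a =>
    rw [aeval_single_neg_one_monomial, coeff_single, coeff_monomial]
    simp [eq_comm]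

theorem Monic.coeff_aeval_single_neg_one_mul_single_sub_one {p : R[X]} (hp : p.Monic) {m : ℤ}
    (hm : m ≤ 0) :
    (aeval (single (-1) 1 : LaurentSeries R) p * single (p.natDegree : ℤ) 1 - 1).coeff m = 0 := by
  obtain ⟨i, hi⟩ : ∃ i : ℕ, (i : ℤ) = p.natDegree - m := ⟨_, Int.toNat_of_nonneg (by omega)⟩
  obtain rfl : m = -(i : ℤ) + p.natDegree := by omega
  rw [HahnSeries.coeff_sub, coeff_mul_single_add, coeff_aeval_single_neg_one_natCast_neg, mul_one,
    HahnSeries.coeff_one]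
  rcases (show p.natDegree ≤ i by omega).eq_or_lt with hd | hd
  · simp [← hd, hp.coeff_natDegree]
  · rw [coeff_eq_zero_of_natDegree_lt hd, if_neg (by omega), sub_zero]

end Polynomial

theorem FiniteField.aeval_pow_card {K A : Type*} [Field K] [Fintype K] [CommSemiring A] [Algebra K A]
    (x : A) (f : K[X]) : aeval (x ^ Fintype.card K) f = aeval x f ^ Fintype.card K := by
  rw [← expand_aeval, FiniteField.expand_card, map_pow]

theorem ZMod.eq_of_pow_eq_comp_X_pow {p : ℕ} [Fact p.Prime] {f g : (ZMod p)[X]}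
    (h : g ^ p = f.comp (X ^ p)) : g = f :=
  frobenius_inj (ZMod p)[X] p <| by
    rw [frobenius_def, frobenius_def, h, ← expand_eq_comp_X_pow, ZMod.expand_card]

theorem mul_upow_sq_neg {M S : Type*} [Monoid M] [Ring S] (upow : M → S → M) {u : M}
    (hone : upow u 1 = u) (hadd : ∀ y y', upow u (y + y') = upow u y * upow u y')
    (hmul_self : ∀ y, upow (u * u) y = upow u y * upow u y) (y : S) :
    u * upow (u ^ 2) (-y) = upow u (-(2 * y - 1)) := by
  conv_lhs => rw [sq, hmul_self, ← hadd]; enter [1]; rw [← hone]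
  rw [← hadd, show (1 : S) + (-y + -y) = -(2 * y - 1) by rw [two_mul]; abel]

open Polynomial in
theorem stmt10_general
    (E : ℕ → Finset (Polynomial (ZMod 2)))
    (hE : ∀ d n, n ∈ E d ↔ n.Monic ∧ n.natDegree = d)
    (sq : Polynomial (ZMod 2) → Polynomial (ZMod 2))
    (hsq : ∀ n, sq n ^ 2 = n.comp (Polynomial.X ^ 2))
    (s : LaurentSeries (ZMod 2)) (hs : s = HahnSeries.single (1 : ℤ) (1 : ZMod 2))
    (U1 : Set (LaurentSeries (ZMod 2)))
    (hU1 : ∀ u, u ∈ U1 ↔ ∀ n : ℤ, n ≤ 0 → (u - 1).coeff n = 0)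
    (upow : LaurentSeries (ZMod 2) → ℤ_[2] → LaurentSeries (ZMod 2))
    (hint : ∀ u ∈ U1, ∀ m : ℤ, upow u (m : ℤ_[2]) = u ^ m)
    (hadd : ∀ u ∈ U1, ∀ y y' : ℤ_[2], upow u (y + y') = upow u y * upow u y')
    (hhom : ∀ u ∈ U1, ∀ w ∈ U1, ∀ y : ℤ_[2], upow (u * w) y = upow u y * upow w y)
    (bracket bracket' : Polynomial (ZMod 2) → LaurentSeries (ZMod 2))
    (hbracket : ∀ n, bracket n = aeval ((s⁻¹) ^ 2) n * s ^ (2 * n.natDegree))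
    (hbracket' : ∀ m, bracket' m = aeval s⁻¹ m * s ^ m.natDegree)
    (y : ℤ_[2]) :
    (PowerSeries.mk fun d => ∑ n ∈ E d, aeval s⁻¹ (sq n) * upow (bracket n) (-y)) =
      (PowerSeries.mk fun d =>
        s ^ (-(d : ℤ)) * ∑ m ∈ E d, upow (bracket' m) (-(2 * y - 1))) := by
  have hs0 : s ≠ 0 := hs ▸ single_ne_zero one_ne_zero
  have hs_inv : s⁻¹ = single (-1) 1 := by rw [hs, inv_single, inv_one]
  have hs_pow (k : ℕ) : s ^ k = single (k : ℤ) 1 := by rw [hs, RatFunc.single_one_eq_pow]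
  refine PowerSeries.ext fun d => ?_
  rw [PowerSeries.coeff_mk, PowerSeries.coeff_mk, Finset.mul_sum]
  refine Finset.sum_congr rfl fun n hn => ?_
  obtain ⟨hmon, rfl⟩ := (hE _ n).1 hn
  have hu : bracket' n ∈ U1 := (hU1 _).2 fun m hm => by
    rw [hbracket', hs_inv, hs_pow]
    exact hmon.coeff_aeval_single_neg_one_mul_single_sub_one hm
  have hbracket_eq : bracket n = bracket' n ^ 2 := by
    have h := FiniteField.aeval_pow_card s⁻¹ n
    rw [ZMod.card] at h
    rw [hbracket, hbracket', h, mul_pow, ← pow_mul, mul_comm 2]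
  have haeval_eq : aeval s⁻¹ n = s ^ (-(n.natDegree : ℤ)) * bracket' n := by
    rw [hbracket', mul_left_comm, ← zpow_natCast, ← zpow_add₀ hs0, neg_add_cancel, zpow_zero,
      mul_one]
  rw [ZMod.eq_of_pow_eq_comp_X_pow (hsq n), haeval_eq, hbracket_eq, mul_assoc,
    mul_upow_sq_neg upow (by simpa using hint _ hu 1) (hadd _ hu) (hhom _ hu _ hu)]

open Polynomial in
/-- With `r = 2`, `A = F₂[T]`, `A' = F₂[√T]`, `n ↦ n'` the square-root
bijection on monics (`(n')² = n((√T)²)`), work in `K' = F₂((1/√θ))` with uniformizer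
`s = π' = 1/√θ` (so `θ = s⁻²`, `√θ = s⁻¹`).  Let `upow` be the `ℤ₂`-exponentiation of
`1`-units.  With `⟨n⟩ = n(θ)/θ^{deg n}` (the 1-unit part w.r.t. `π = 1/T`) and
`⟨m⟩' = m(√θ)/√θ^{deg m}`, the Dirichlet series
`L(x,y) = Σ_{n monic} x^{-deg n}·n'(√θ)·⟨n⟩^{-y}` satisfies
`L(x,y) = ζ_{A'}(x·π', 2y - 1)`, coefficientwise as formal series in `x⁻¹` with
coefficients in `F₂((1/√θ))`. -/
theorem stmt10
    (E : ℕ → Finset (Polynomial (ZMod 2)))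
    (hE : ∀ d n, n ∈ E d ↔ n.Monic ∧ n.natDegree = d)
    (sq : Polynomial (ZMod 2) → Polynomial (ZMod 2))
    (hsq : ∀ n, sq n ^ 2 = n.comp (Polynomial.X ^ 2))
    (s : LaurentSeries (ZMod 2)) (hs : s = HahnSeries.single (1 : ℤ) (1 : ZMod 2))
    (U1 : Set (LaurentSeries (ZMod 2)))
    (hU1 : ∀ u, u ∈ U1 ↔ ∀ n : ℤ, n ≤ 0 → (u - 1).coeff n = 0)
    (upow : LaurentSeries (ZMod 2) → ℤ_[2] → LaurentSeries (ZMod 2))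
    (hmem : ∀ u ∈ U1, ∀ y, upow u y ∈ U1)
    (hint : ∀ u ∈ U1, ∀ m : ℤ, upow u (m : ℤ_[2]) = u ^ m)
    (hadd : ∀ u ∈ U1, ∀ y y' : ℤ_[2], upow u (y + y') = upow u y * upow u y')
    (hmul : ∀ u ∈ U1, ∀ y y' : ℤ_[2], upow u (y * y') = upow (upow u y) y')
    (hhom : ∀ u ∈ U1, ∀ w ∈ U1, ∀ y : ℤ_[2], upow (u * w) y = upow u y * upow w y)
    (bracket bracket' : Polynomial (ZMod 2) → LaurentSeries (ZMod 2))
    (hbracket : ∀ n, bracket n = aeval ((s⁻¹) ^ 2) n * s ^ (2 * n.natDegree))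
    (hbracket' : ∀ m, bracket' m = aeval s⁻¹ m * s ^ m.natDegree)
    (y : ℤ_[2]) :
    (PowerSeries.mk fun d => ∑ n ∈ E d, aeval s⁻¹ (sq n) * upow (bracket n) (-y)) =
      (PowerSeries.mk fun d =>
        s ^ (-(d : ℤ)) * ∑ m ∈ E d, upow (bracket' m) (-(2 * y - 1))) :=
  stmt10_general E hE sq hsq s hs U1 hU1 upow hint hadd hhom bracket bracket' hbracket hbracket' y
end
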